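/- arXiv:2406.13562 — 10 statements merged into one kernel-verified Lean document; each statement's English description precedes it below -/
import Mathlib

section
/- For any polynomial g ∈ ℂ[s], the assignments p·x = x(s-1)g(s), q·x = 0, r·x = 0, s·x = s·x(s) for x = x(s) ∈ ℂ[s] define an H₄-module structure on ℂ[s] (denoted M_{(g,0)}). -/
/-! Since `q` and `r` act by zero, every relation except `[s, p] = p` is a bracket with `0`.
That one holds because `X * x(X - a) - (X * x)(X - a) = a * x(X - a)`. -/

open Polynomial

namespace Polynomial

variable {R : Type*} [CommRing R]

noncomputable def shiftMul (a : R) (g : R[X]) : Module.End R R[X] :=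
  LinearMap.mulRight R g ∘ₗ (aeval (X - C a)).toLinearMap

@[simp]
theorem shiftMul_apply (a : R) (g x : R[X]) : shiftMul a g x = aeval (X - C a) x * g := rfl

theorem lie_mulLeft_X_shiftMul (a : R) (g : R[X]) :
    ⁅LinearMap.mulLeft R (X : R[X]), shiftMul a g⁆ = a • shiftMul a g := by
  refine LinearMap.ext fun x => ?_
  simp only [Ring.lie_def, LinearMap.sub_apply, Module.End.mul_apply, LinearMap.mulLeft_apply,
    shiftMul_apply, map_mul, aeval_X, LinearMap.smul_apply, smul_eq_C_mul]
  ring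

end Polynomial

/-- For any g ∈ ℂ[s], the assignments p·x = x(s-1)g(s), q·x = 0, r·x = 0,
s·x = s·x(s) define an H₄-module structure on ℂ[s], i.e. the corresponding
operators satisfy the defining bracket relations of H₄:
[p,q] = r, [s,p] = p, [s,q] = -q, [r,·] = 0. -/
theorem stmt2 (g : Polynomial ℂ) :
    ∀ (P Q R S : Module.End ℂ (Polynomial ℂ)),
      (∀ x, P x = Polynomial.aeval (Polynomial.X - Polynomial.C 1 : Polynomial ℂ) x * g) →
      (∀ x, Q x = 0) →
      (∀ x, R x = 0) →
      (∀ x, S x = Polynomial.X * x) →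
      (⁅P, Q⁆ = R ∧ ⁅S, P⁆ = P ∧ ⁅S, Q⁆ = -Q ∧
        ⁅R, P⁆ = 0 ∧ ⁅R, Q⁆ = 0 ∧ ⁅R, S⁆ = 0) := by
  intro P Q R S hP hQ hR hS
  obtain rfl : P = shiftMul 1 g := LinearMap.ext hP
  obtain rfl : Q = 0 := LinearMap.ext hQ
  obtain rfl : R = 0 := LinearMap.ext hR
  obtain rfl : S = LinearMap.mulLeft ℂ X := LinearMap.ext hS
  refine ⟨(Commute.zero_right _).lie_eq, ?_, (Commute.zero_right _).lie_eq.trans neg_zero.symm,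
    (Commute.zero_left _).lie_eq, (Commute.zero_left _).lie_eq, (Commute.zero_left _).lie_eq⟩
  rw [lie_mulLeft_X_shiftMul, one_smul]
end

section
/- Let h(s) = a₁s + a₂ with a₁ ∈ ℂ*, a₂ ∈ ℂ, and b ∈ ℂ*. The assignments p·x = x(s-1)h(s), q·x = x(s+1)b, r·x = -a₁b·x, s·x = s·x(s) for x = x(s) ∈ ℂ[s] define an H₄-module structure on ℂ[s] (denoted M_{(h,b)}). -/
open Polynomial

/-! With `τ_c` the substitution `s ↦ s + c`, the operators `P = h · τ₋₁` and `Q = b · τ₁` are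
weighted shifts, `S` is multiplication by `s` and `R` is a scalar. As `τ₁` and `τ₋₁` are mutually
inverse ring automorphisms, `⁅P, Q⁆` is multiplication by `b h(s) - b h(s + 1) = -a₁ b`, while
`s τ_c - τ_c s = -c τ_c` gives `⁅S, P⁆ = P` and `⁅S, Q⁆ = -Q`. -/

section
variable {R : Type*} [CommRing R]

theorem aeval_X_sub_C_aeval_X_add_C (c : R) (x : R[X]) :
    aeval (X - C c) (aeval (X + C c) x) = x := by
  rw [← aeval_algHom_apply]
  simp

theorem aeval_X_add_C_aeval_X_sub_C (c : R) (x : R[X]) :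
    aeval (X + C c) (aeval (X - C c) x) = x := by
  rw [← aeval_algHom_apply]
  simp

theorem lie_shift_mul_apply {P Q : Module.End R R[X]} {c : R} {f g : R[X]}
    (hP : ∀ x, P x = aeval (X - C c) x * f) (hQ : ∀ x, Q x = aeval (X + C c) x * g) (x : R[X]) :
    ⁅P, Q⁆ x = (aeval (X - C c) g * f - aeval (X + C c) f * g) * x := by
  simp only [Ring.lie_def, LinearMap.sub_apply, Module.End.mul_apply, hP, hQ, map_mul,
    aeval_X_sub_C_aeval_X_add_C, aeval_X_add_C_aeval_X_sub_C]
  ring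

theorem lie_X_mul_shift_mul {S T : Module.End R R[X]} {c : R} {g : R[X]}
    (hS : ∀ x, S x = X * x) (hT : ∀ x, T x = aeval (X + C c) x * g) :
    ⁅S, T⁆ = (-c) • T := by
  refine LinearMap.ext fun x => ?_
  simp only [Ring.lie_def, LinearMap.sub_apply, Module.End.mul_apply, LinearMap.smul_apply, hS,
    hT, map_mul, aeval_X, smul_eq_C_mul, C_neg]
  ring

end

theorem lie_eq_zero_of_forall_apply_eq_smul {R M : Type*} [CommRing R] [AddCommGroup M]
    [Module R M] {A : Module.End R M} {k : R} (hA : ∀ x, A x = k • x) (T : Module.End R M) :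
    ⁅A, T⁆ = 0 := by
  refine LinearMap.ext fun x => ?_
  simp [Ring.lie_def, hA]

theorem stmt3_general (a₁ a₂ b : ℂ) :
    ∀ (P Q R S : Module.End ℂ (Polynomial ℂ)),
      (∀ x, P x = Polynomial.aeval (Polynomial.X - Polynomial.C 1 : Polynomial ℂ) x *
          (Polynomial.C a₁ * Polynomial.X + Polynomial.C a₂)) →
      (∀ x, Q x = Polynomial.aeval (Polynomial.X + Polynomial.C 1 : Polynomial ℂ) x *
          Polynomial.C b) →
      (∀ x, R x = (-(a₁ * b)) • x) →
      (∀ x, S x = Polynomial.X * x) →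
      (⁅P, Q⁆ = R ∧ ⁅S, P⁆ = P ∧ ⁅S, Q⁆ = -Q ∧
        ⁅R, P⁆ = 0 ∧ ⁅R, Q⁆ = 0 ∧ ⁅R, S⁆ = 0) := by
  intro P Q R S hP hQ hR hS
  have hP' : ∀ x, P x = aeval (X + C (-1)) x * (C a₁ * X + C a₂) := by
    simpa only [C_neg, ← sub_eq_add_neg] using hP
  refine ⟨?_, by simpa using lie_X_mul_shift_mul hS hP',
    (lie_X_mul_shift_mul hS hQ).trans (neg_one_smul ℂ Q), lie_eq_zero_of_forall_apply_eq_smul hR P, lie_eq_zero_of_forall_apply_eq_smul hR Q,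
    lie_eq_zero_of_forall_apply_eq_smul hR S⟩
  refine LinearMap.ext fun x => ?_
  rw [lie_shift_mul_apply hP hQ, hR, smul_eq_C_mul]
  congr 1
  simp only [aeval_C, algebraMap_eq, map_add, map_mul, aeval_X, C_neg, map_one]
  ring

/-- For h(s) = a₁s + a₂ with a₁ ≠ 0 and b ≠ 0, the assignments
p·x = x(s-1)h(s), q·x = x(s+1)b, r·x = -a₁b·x, s·x = s·x(s) define an
H₄-module structure on ℂ[s] (the module M_{(h,b)}): the operators satisfy
[p,q] = r, [s,p] = p, [s,q] = -q, [r,·] = 0. -/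
theorem stmt3 (a₁ a₂ b : ℂ) (ha₁ : a₁ ≠ 0) (hb : b ≠ 0) :
    ∀ (P Q R S : Module.End ℂ (Polynomial ℂ)),
      (∀ x, P x = Polynomial.aeval (Polynomial.X - Polynomial.C 1 : Polynomial ℂ) x *
          (Polynomial.C a₁ * Polynomial.X + Polynomial.C a₂)) →
      (∀ x, Q x = Polynomial.aeval (Polynomial.X + Polynomial.C 1 : Polynomial ℂ) x *
          Polynomial.C b) →
      (∀ x, R x = (-(a₁ * b)) • x) →
      (∀ x, S x = Polynomial.X * x) →
      (⁅P, Q⁆ = R ∧ ⁅S, P⁆ = P ∧ ⁅S, Q⁆ = -Q ∧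
        ⁅R, P⁆ = 0 ∧ ⁅R, Q⁆ = 0 ∧ ⁅R, S⁆ = 0) :=
  stmt3_general a₁ a₂ b
end

section
/- Let a, b ∈ ℂ* be nonzero constants. The assignments p·x = x(s-1)a, q·x = x(s+1)b, r·x = 0, s·x = s·x(s) for x ∈ ℂ[s] define an H₄-module structure on ℂ[s] (denoted M_{(a,b)}). -/
/-!
Writing `T_c f = f(s + c)` for the Taylor shift, the operators are `p = a • T_{-1}`,
`q = b • T_1`, `r = 0` and `s` = multiplication by `s`. Shifts commute, which gives
`[p, q] = 0 = r`, and `s · T_c f - T_c (s f) = -c • T_c f`, which gives `[s, p] = p` and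
`[s, q] = -q`.
-/

open Polynomial

namespace Polynomial

variable {R : Type*} [CommRing R]

theorem commute_taylor (r t : R) : Commute (taylor r) (taylor t) :=
  LinearMap.ext fun f => by simp [taylor_taylor, add_comm]

theorem lie_mulLeft_X_smul_taylor (c r : R) :
    ⁅LinearMap.mulLeft R (X : R[X]), c • taylor r⁆ = -r • c • taylor r := by
  refine LinearMap.ext fun f => ?_
  simp only [Ring.lie_def, LinearMap.sub_apply, Module.End.mul_apply, LinearMap.mulLeft_apply,
    LinearMap.smul_apply, taylor_mul, taylor_X, smul_eq_C_mul, C_neg]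
  ring

end Polynomial

theorem stmt4_general (a b : ℂ) :
    ∀ (P Q R S : Module.End ℂ (Polynomial ℂ)),
      (∀ x, P x = Polynomial.aeval (Polynomial.X - Polynomial.C 1 : Polynomial ℂ) x *
          Polynomial.C a) →
      (∀ x, Q x = Polynomial.aeval (Polynomial.X + Polynomial.C 1 : Polynomial ℂ) x *
          Polynomial.C b) →
      (∀ x, R x = 0) →
      (∀ x, S x = Polynomial.X * x) →
      (⁅P, Q⁆ = R ∧ ⁅S, P⁆ = P ∧ ⁅S, Q⁆ = -Q ∧
        ⁅R, P⁆ = 0 ∧ ⁅R, Q⁆ = 0 ∧ ⁅R, S⁆ = 0) := by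
  intro P Q R S hP hQ hR hS
  obtain rfl : P = a • taylor (-1) := LinearMap.ext fun x => by
    rw [hP, ← comp_eq_aeval, sub_eq_add_neg, ← C_neg, mul_comm, ← smul_eq_C_mul]; rfl
  obtain rfl : Q = b • taylor 1 := LinearMap.ext fun x => by
    rw [hQ, ← comp_eq_aeval, mul_comm, ← smul_eq_C_mul]; rfl
  obtain rfl : R = 0 := LinearMap.ext hR
  obtain rfl : S = LinearMap.mulLeft ℂ X := LinearMap.ext hS
  refine ⟨?_, ?_, ?_, ?_, ?_, ?_⟩
  · rw [Ring.lie_def, sub_eq_zero]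
    exact ((commute_taylor _ _).smul_left a).smul_right b
  · rw [lie_mulLeft_X_smul_taylor]; module
  · rw [lie_mulLeft_X_smul_taylor]; module
  all_goals rw [Ring.lie_def, zero_mul, mul_zero, sub_zero]

/-- For nonzero constants a, b ∈ ℂ*, the assignments p·x = x(s-1)a,
q·x = x(s+1)b, r·x = 0, s·x = s·x(s) define an H₄-module structure on ℂ[s]
(the module M_{(a,b)}): the operators satisfy
[p,q] = r, [s,p] = p, [s,q] = -q, [r,·] = 0. -/
theorem stmt4 (a b : ℂ) (ha : a ≠ 0) (hb : b ≠ 0) :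
    ∀ (P Q R S : Module.End ℂ (Polynomial ℂ)),
      (∀ x, P x = Polynomial.aeval (Polynomial.X - Polynomial.C 1 : Polynomial ℂ) x *
          Polynomial.C a) →
      (∀ x, Q x = Polynomial.aeval (Polynomial.X + Polynomial.C 1 : Polynomial ℂ) x *
          Polynomial.C b) →
      (∀ x, R x = 0) →
      (∀ x, S x = Polynomial.X * x) →
      (⁅P, Q⁆ = R ∧ ⁅S, P⁆ = P ∧ ⁅S, Q⁆ = -Q ∧
        ⁅R, P⁆ = 0 ∧ ⁅R, Q⁆ = 0 ∧ ⁅R, S⁆ = 0) :=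
  stmt4_general a b
end

section
/- Let M be an H₄-module which is free of rank one over U(ℂs) = ℂ[s] with s acting by multiplication. If p·1 = 0 or q·1 = 0, then r·1 = 0. -/
open Polynomial

/-- Let M be an H₄-module free of rank one over U(ℂs) = ℂ[s] with s acting by
multiplication.  If p·1 = 0 or q·1 = 0 then r·1 = 0. -/
theorem stmt7 (P Q R S : Module.End ℂ (Polynomial ℂ))
    (hS : ∀ x, S x = Polynomial.X * x)
    (hPQ : ⁅P, Q⁆ = R) (hSP : ⁅S, P⁆ = P) (hSQ : ⁅S, Q⁆ = -Q)
    (hRP : ⁅R, P⁆ = 0) (hRQ : ⁅R, Q⁆ = 0) (hRS : ⁅R, S⁆ = 0)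
    (h : P 1 = 0 ∨ Q 1 = 0) :
    R 1 = 0 := by
  have key : ∀ (T : Module.End ℂ (Polynomial ℂ)) (c : Polynomial ℂ),
      (∀ f, T (X * f) = X * T f + c * T f) → T 1 = 0 → ∀ f, T f = 0 := by
    intro T c hTX hT1 f
    induction f using Polynomial.induction_on' with
    | add p q hp hq => rw [map_add, hp, hq, add_zero]
    | monomial n a =>
      have hXn : ∀ n : ℕ, T (X ^ n) = 0 := by
        intro n
        induction n with
        | zero => simpa using hT1
        | succ n ih => rw [pow_succ, mul_comm, hTX, ih, mul_zero, mul_zero, add_zero]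
      have : (monomial n a : Polynomial ℂ) = a • X ^ n := by
        rw [smul_eq_C_mul, ← C_mul_X_pow_eq_monomial]
      rw [this, map_smul, hXn, smul_zero]
  have hbr : R 1 = P (Q 1) - Q (P 1) := by
    rw [← hPQ]; rfl
  rcases h with h | h
  · have hP : ∀ f, P f = 0 := by
      apply key P (-1) _ h
      intro f
      have := congrArg (fun (T : Module.End ℂ (Polynomial ℂ)) => T f) hSP
      simp only [LieRing.of_associative_ring_bracket, LinearMap.sub_apply,
        Module.End.mul_apply] at this
      rw [hS, hS] at this
      linear_combination -this
    rw [hbr, hP, h, map_zero, sub_zero]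
  · have hQ : ∀ f, Q f = 0 := by
      apply key Q 1 _ h
      intro f
      have := congrArg (fun (T : Module.End ℂ (Polynomial ℂ)) => T f) hSQ
      simp only [LieRing.of_associative_ring_bracket, LinearMap.sub_apply,
        Module.End.mul_apply, LinearMap.neg_apply] at this
      rw [hS, hS] at this
      linear_combination -this
    rw [hbr, hQ, map_zero, hQ, sub_zero]
end

section
/- Let M be an H₄-module which is free of rank one over U(ℂs) = ℂ[s] with s acting by multiplication. If p·1 ≠ 0 or q·1 ≠ 0, then r·1 is a constant polynomial. -/
/-!
Since `s` acts as multiplication by `X`, a relation `[s, a] = c a` makes `a` semilinear for the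
shift `s ↦ s - c`, so `a f = f(s - c) · a 1`.  For `r` (where `c = 0`) this says that `r` is
multiplication by `r 1`, and then `[r, p] = 0` evaluated at `1` reads
`r 1 · p 1 = (r 1)(s - 1) · p 1`.  Cancelling `p 1 ≠ 0`, the polynomial `r 1` is invariant under
the shift by `1`, hence takes the same value at `0, -1, -2, …` and is constant.  The case
`q 1 ≠ 0` is the same with the shift by `-1`.
-/

open Polynomial

namespace Polynomial

theorem eq_C_of_comp_X_sub_C_eq_self {K : Type*} [Field K] [CharZero K] {r : K[X]} {c : K}
    (hc : c ≠ 0) (hr : r.comp (X - C c) = r) : r = C (r.eval 0) := by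
  have hperiodic : Function.Periodic (fun x => r.eval x) (-c) := fun x => by
    conv_rhs => rw [← hr]
    simp [sub_eq_add_neg]
  refine eq_of_infinite_eval_eq _ _ (Set.Infinite.mono ?_ <|
    Set.infinite_range_of_injective <| (mul_left_injective₀ (neg_ne_zero.mpr hc)).comp
      (Nat.cast_injective (R := K)))
  rintro _ ⟨n, rfl⟩
  simpa using hperiodic.nat_mul_eq n

section ShiftSemilinear

variable {R : Type*} [CommRing R] {S A : Module.End R R[X]}

theorem apply_X_mul_of_lie_eq_smul (hS : ∀ f, S f = X * f) {c : R} (hA : ⁅S, A⁆ = c • A)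
    (f : R[X]) : A (X * f) = (X - C c) * A f := by
  have h := LinearMap.congr_fun hA f
  simp only [Ring.lie_def, LinearMap.sub_apply, Module.End.mul_apply, LinearMap.smul_apply,
    hS, smul_eq_C_mul] at h
  linear_combination -h

theorem apply_eq_comp_mul_of_apply_X_mul {c : R} (hA : ∀ f, A (X * f) = (X - C c) * A f)
    (f : R[X]) : A f = f.comp (X - C c) * A 1 := by
  induction f using Polynomial.induction_on with
  | C a => rw [← mul_one (C a), ← smul_eq_C_mul, map_smul]; simp [smul_eq_C_mul]
  | add f g hf hg => simp [hf, hg, add_mul]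
  | monomial n a ih =>
    rw [show C a * X ^ (n + 1) = X * (C a * X ^ n) by ring, hA, ih]
    simp only [mul_comp, C_comp, pow_comp, X_comp]
    ring

theorem apply_eq_comp_mul_of_lie_eq_smul (hS : ∀ f, S f = X * f) {c : R}
    (hA : ⁅S, A⁆ = c • A) (f : R[X]) : A f = f.comp (X - C c) * A 1 :=
  apply_eq_comp_mul_of_apply_X_mul (apply_X_mul_of_lie_eq_smul hS hA) f

theorem apply_eq_mul_of_lie_eq_zero (hS : ∀ f, S f = X * f) (hA : ⁅S, A⁆ = 0) (f : R[X]) :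
    A f = f * A 1 := by
  simpa using apply_eq_comp_mul_of_lie_eq_smul hS (c := 0) (by rw [hA, zero_smul]) f

end ShiftSemilinear

theorem exists_apply_one_eq_C_of_lie_eq_zero {K : Type*} [Field K] [CharZero K]
    {S A B : Module.End K K[X]} (hS : ∀ f, S f = X * f) {c : K} (hc : c ≠ 0)
    (hA : ⁅S, A⁆ = c • A) (hB : ⁅S, B⁆ = 0) (hBA : ⁅B, A⁆ = 0) (hA1 : A 1 ≠ 0) :
    ∃ d, B 1 = C d := by
  have hcomm : B (A 1) = A (B 1) := by
    simpa [Ring.lie_def, sub_eq_zero] using LinearMap.congr_fun hBA 1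
  rw [apply_eq_mul_of_lie_eq_zero hS hB (A 1), apply_eq_comp_mul_of_lie_eq_smul hS hA (B 1),
    mul_comm (A 1)] at hcomm
  exact ⟨_, eq_C_of_comp_X_sub_C_eq_self hc (mul_right_cancel₀ hA1 hcomm).symm⟩

end Polynomial

theorem stmt8_general (P Q R S : Module.End ℂ (Polynomial ℂ))
    (hS : ∀ x, S x = Polynomial.X * x)
    (hSP : ⁅S, P⁆ = P) (hSQ : ⁅S, Q⁆ = -Q)
    (hRP : ⁅R, P⁆ = 0) (hRQ : ⁅R, Q⁆ = 0) (hRS : ⁅R, S⁆ = 0)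
    (h : P 1 ≠ 0 ∨ Q 1 ≠ 0) :
    ∃ c : ℂ, R 1 = Polynomial.C c := by
  have hSR : ⁅S, R⁆ = 0 := (commute_iff_lie_eq.mpr hRS).symm.lie_eq
  rcases h with hP1 | hQ1
  · exact exists_apply_one_eq_C_of_lie_eq_zero hS one_ne_zero (by rw [hSP, one_smul]) hSR
      hRP hP1
  · exact exists_apply_one_eq_C_of_lie_eq_zero hS (neg_ne_zero.mpr one_ne_zero)
      (by rw [hSQ, neg_one_smul ℂ Q]) hSR hRQ hQ1

/-- Let M be an H₄-module free of rank one over U(ℂs) = ℂ[s] with s acting by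
multiplication.  If p·1 ≠ 0 or q·1 ≠ 0 then r·1 is a constant polynomial. -/
theorem stmt8 (P Q R S : Module.End ℂ (Polynomial ℂ))
    (hS : ∀ x, S x = Polynomial.X * x)
    (hPQ : ⁅P, Q⁆ = R) (hSP : ⁅S, P⁆ = P) (hSQ : ⁅S, Q⁆ = -Q)
    (hRP : ⁅R, P⁆ = 0) (hRQ : ⁅R, Q⁆ = 0) (hRS : ⁅R, S⁆ = 0)
    (h : P 1 ≠ 0 ∨ Q 1 ≠ 0) :
    ∃ c : ℂ, R 1 = Polynomial.C c :=
  stmt8_general P Q R S hS hSP hSQ hRP hRQ hRS h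
end

section
/- Let M be an H₄-module which is free of rank one over U(ℂs) = ℂ[s] with s acting by multiplication, and suppose p·1 ≠ 0 and q·1 ≠ 0. Then either both p·1 and q·1 are nonzero constants, or one of p·1, q·1 has degree exactly 1 and the other is a nonzero constant. -/
open Polynomial

lemma stmt9_shift (T : Module.End ℂ (Polynomial ℂ)) (u : Polynomial ℂ)
    (hstep : ∀ x, T (Polynomial.X * x) = u * T x) :
    ∀ x : Polynomial ℂ, T x = x.comp u * T 1 := by
  intro x
  induction x using Polynomial.induction_on with
  | C a =>
    have h1 : T (C a) = a • T 1 := by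
      rw [show (C a : ℂ[X]) = a • (1 : ℂ[X]) from by rw [smul_eq_C_mul, mul_one]]
      exact map_smul T a 1
    rw [h1, C_comp, smul_eq_C_mul]
  | add p q hp hq =>
    rw [map_add, hp, hq, add_comp, add_mul]
  | monomial n a ih =>
    have h2 : (C a : ℂ[X]) * X ^ (n + 1) = X * (C a * X ^ n) := by ring
    rw [h2, hstep, ih]
    simp only [mul_comp, C_comp, X_pow_comp, X_comp, pow_succ]
    ring

/-- Let M be an H₄-module free of rank one over U(ℂs) = ℂ[s] with s acting by
multiplication, and suppose p·1 ≠ 0 and q·1 ≠ 0.  Then either both p·1 and q·1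
are nonzero constants, or one of p·1, q·1 has degree exactly 1 and the other is
a nonzero constant. -/
theorem stmt9 (P Q R S : Module.End ℂ (Polynomial ℂ))
    (hS : ∀ x, S x = Polynomial.X * x)
    (hPQ : ⁅P, Q⁆ = R) (hSP : ⁅S, P⁆ = P) (hSQ : ⁅S, Q⁆ = -Q)
    (hRP : ⁅R, P⁆ = 0) (hRQ : ⁅R, Q⁆ = 0) (hRS : ⁅R, S⁆ = 0)
    (hp : P 1 ≠ 0) (hq : Q 1 ≠ 0) :
    (∃ a b : ℂ, a ≠ 0 ∧ b ≠ 0 ∧ P 1 = Polynomial.C a ∧ Q 1 = Polynomial.C b) ∨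
    ((P 1).natDegree = 1 ∧ ∃ b : ℂ, b ≠ 0 ∧ Q 1 = Polynomial.C b) ∨
    ((Q 1).natDegree = 1 ∧ ∃ b : ℂ, b ≠ 0 ∧ P 1 = Polynomial.C b) := by
  rw [Ring.lie_def] at hPQ hSP hSQ hRP hRQ hRS
  -- step relations
  have hPstep : ∀ x, P (X * x) = (X - 1) * P x := by
    intro x
    have h := congrArg (fun f => f x) hSP
    simp only [LinearMap.sub_apply, Module.End.mul_apply, hS] at h
    linear_combination -h
  have hQstep : ∀ x, Q (X * x) = (X + 1) * Q x := by
    intro x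
    have h := congrArg (fun f => f x) hSQ
    simp only [LinearMap.sub_apply, Module.End.mul_apply, LinearMap.neg_apply, hS] at h
    have : Q (X * x) = X * Q x + Q x := by
      have h2 : X * Q x - Q (X * x) = -Q x := h
      linear_combination -h2
    rw [this]; ring
  have hRstep : ∀ x, R (X * x) = X * R x := by
    intro x
    have h := congrArg (fun f => f x) hRS
    simp only [LinearMap.sub_apply, Module.End.mul_apply, LinearMap.zero_apply, hS] at h
    have : R (X * x) - X * R x = 0 := by linear_combination h
    linear_combination this
  have hPall := stmt9_shift P (X - 1) hPstep
  have hQall := stmt9_shift Q (X + 1) hQstep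
  have hRall : ∀ x : ℂ[X], R x = x * R 1 := by
    intro x
    have := stmt9_shift R X hRstep x
    simpa using this
  -- R 1 explicitly
  have hR1 : R 1 = (Q 1).comp (X - 1) * P 1 - (P 1).comp (X + 1) * Q 1 := by
    have h := congrArg (fun f => f (1 : ℂ[X])) hPQ
    simp only [LinearMap.sub_apply, Module.End.mul_apply] at h
    rw [← h, hPall (Q 1), hQall (P 1)]
  -- R 1 is fixed by shift
  have hshift : (R 1).comp (X - 1) = R 1 := by
    have h := congrArg (fun f0 => f0 (1 : ℂ[X])) hRP
    simp only [LinearMap.sub_apply, Module.End.mul_apply, LinearMap.zero_apply] at h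
    have h2 : R (P 1) = P (R 1) := by linear_combination h
    rw [hRall (P 1), hPall (R 1)] at h2
    have h3 : P 1 * R 1 = (R 1).comp (X - 1) * P 1 := h2
    apply mul_right_cancel₀ hp
    rw [← h3]; ring
  -- hence R 1 is constant
  obtain ⟨c, hc⟩ : ∃ c : ℂ, R 1 = C c := by
    refine ⟨(R 1).eval 0, ?_⟩
    have heval : ∀ t : ℂ, (R 1).eval (t + 1) = (R 1).eval t := by
      intro t
      have := congrArg (eval (t + 1)) hshift
      simpa [eval_comp] using this.symm
    have hnat : ∀ n : ℕ, (R 1).eval (n : ℂ) = (R 1).eval 0 := by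
      intro n
      induction n with
      | zero => simp
      | succ k ih => push_cast; rw [heval, ih]
    apply eq_of_infinite_eval_eq
    apply Set.infinite_of_injective_forall_mem
      (f := (fun n : ℕ => (n : ℂ)))
    case hi => exact Nat.cast_injective
    case hf =>
      intro n
      simp only [Set.mem_setOf_eq, eval_C]
      exact hnat n
  -- F and its difference equation
  set f : ℂ[X] := P 1 with hf
  set g : ℂ[X] := Q 1 with hg
  set F : ℂ[X] := g.comp (X - 1) * f with hF
  have hFcomp : F.comp (X + 1) = g * f.comp (X + 1) := by
    rw [hF, mul_comp, comp_assoc]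
    congr 2
    simp [sub_comp]
  have hdiff : F - F.comp (X + 1) = C c := by
    rw [hFcomp, hF, ← hc, hR1, hF]; ring
  have hFeval : ∀ t : ℂ, F.eval (t + 1) = F.eval t - c := by
    intro t
    have := congrArg (eval t) hdiff
    simp only [eval_sub, eval_comp, eval_add, eval_X, eval_one, eval_C] at this
    linear_combination -this
  have hFnat : ∀ n : ℕ, F.eval (n : ℂ) = F.eval 0 - n * c := by
    intro n
    induction n with
    | zero => simp
    | succ k ih => push_cast; rw [hFeval, ih]; ring
  have hFeq : F = C (F.eval 0) - C c * X := by
    apply eq_of_infinite_eval_eq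
    apply Set.infinite_of_injective_forall_mem (f := (fun n : ℕ => (n : ℂ)))
    case hi => exact Nat.cast_injective
    case hf =>
      intro n
      simp only [Set.mem_setOf_eq, eval_sub, eval_mul, eval_C, eval_X]
      rw [hFnat n]; ring
  have hFdeg : F.natDegree ≤ 1 := by
    rw [hFeq]
    refine le_trans (natDegree_sub_le _ _) ?_
    simp only [natDegree_C, max_le_iff]
    refine ⟨Nat.zero_le 1, ?_⟩
    refine le_trans (natDegree_C_mul_le _ _) ?_
    simp [natDegree_X]
  have hgcomp_ne : g.comp (X - 1) ≠ 0 := by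
    intro h0
    apply hq
    have := congrArg (fun p : ℂ[X] => p.comp (X + 1)) h0
    simp only [zero_comp] at this
    rw [comp_assoc] at this
    simpa [sub_comp] using this
  have hdegF : F.natDegree = g.natDegree + f.natDegree := by
    rw [hF, natDegree_mul hgcomp_ne hp, natDegree_comp,
      show (X - 1 : ℂ[X]) = X - C 1 by rw [map_one], natDegree_X_sub_C, mul_one]
  have hsum : g.natDegree + f.natDegree ≤ 1 := by rw [← hdegF]; exact hFdeg
  have hconst : ∀ u : ℂ[X], u ≠ 0 → u.natDegree = 0 → ∃ a : ℂ, a ≠ 0 ∧ u = C a := by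
    intro u hu h0
    refine ⟨u.coeff 0, ?_, eq_C_of_natDegree_eq_zero h0⟩
    intro h
    apply hu
    rw [eq_C_of_natDegree_eq_zero h0, h, map_zero]
  rcases Nat.eq_zero_or_pos f.natDegree with hf0 | hf1
  · rcases Nat.eq_zero_or_pos g.natDegree with hg0 | hg1
    · obtain ⟨a, ha, hfa⟩ := hconst f hp hf0
      obtain ⟨b, hb, hgb⟩ := hconst g hq hg0
      exact Or.inl ⟨a, b, ha, hb, hfa, hgb⟩
    · have hg1' : g.natDegree = 1 := by omega
      obtain ⟨b, hb, hfb⟩ := hconst f hp hf0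
      exact Or.inr (Or.inr ⟨hg1', b, hb, hfb⟩)
  · have hf1' : f.natDegree = 1 := by omega
    have hg0 : g.natDegree = 0 := by omega
    obtain ⟨b, hb, hgb⟩ := hconst g hq hg0
    exact Or.inr (Or.inl ⟨hf1', b, hb, hgb⟩)
end

section
/- Let g ∈ ℂ* be a nonzero constant. The H₄-module M_{(g,0)} = ℂ[s] (with p·x = x(s-1)g, q·x = 0, r·x = 0, s·x = s·x(s)) is irreducible, i.e., it has no nonzero proper H₄-submodules. -/
open Polynomial

private lemma stmt10_one_mem (W : Submodule ℂ (Polynomial ℂ))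
    (hS' : ∀ x ∈ W, x.comp (X - C 1) ∈ W) :
    ∀ n : ℕ, ∀ x ∈ W, x ≠ 0 → x.natDegree ≤ n → (1 : Polynomial ℂ) ∈ W := by
  intro n
  induction n with
  | zero =>
    intro x hxW hx0 hdeg
    set c := x.coeff 0 with hc'
    have hx : x = C c := eq_C_of_natDegree_eq_zero (Nat.le_zero.mp hdeg)
    have hc : c ≠ 0 := fun h => hx0 (by rw [hx, h, map_zero])
    have : (1 : Polynomial ℂ) = c⁻¹ • x := by
      rw [hx, smul_C, smul_eq_mul, inv_mul_cancel₀ hc, C_1]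
    rw [this]
    exact W.smul_mem _ hxW
  | succ n ih =>
    intro x hxW hx0 hdeg
    by_cases hd : x.natDegree ≤ n
    · exact ih x hxW hx0 hd
    have hdx : x.natDegree = n + 1 := le_antisymm hdeg (Nat.not_le.mp hd)
    set y := x.comp (X - C 1) - x with hy
    have hyW : y ∈ W := W.sub_mem (hS' x hxW) hxW
    -- degree facts about the composition
    have hq : (X - C 1 : Polynomial ℂ).natDegree = 1 := natDegree_X_sub_C 1
    have hlcq : (X - C 1 : Polynomial ℂ).leadingCoeff = 1 := (monic_X_sub_C 1).leadingCoeff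
    have hlc : (x.comp (X - C 1)).leadingCoeff = x.leadingCoeff := by
      rw [leadingCoeff_comp (by rw [hq]; exact one_ne_zero), hlcq, one_pow, mul_one]
    have hnd : (x.comp (X - C 1)).natDegree = x.natDegree := by
      rw [natDegree_comp, hq, mul_one]
    have hcomp0 : x.comp (X - C 1) ≠ 0 := by
      intro h
      apply hx0
      rw [← leadingCoeff_eq_zero, ← hlc, h, leadingCoeff_zero]
    have hdegeq : (x.comp (X - C 1)).degree = x.degree := by
      rw [degree_eq_natDegree hcomp0, degree_eq_natDegree hx0, hnd]
    have hdlt : y.degree < x.degree := by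
      have := degree_sub_lt hdegeq hcomp0 hlc
      rwa [hdegeq] at this
    -- y ≠ 0
    have hy0 : y ≠ 0 := by
      intro h0
      have heq : x.comp (X - C 1) = x := by
        have := sub_eq_zero.mp (hy ▸ h0 : x.comp (X - C 1) - x = 0)
        exact this
      have heval : ∀ t : ℂ, x.eval (t - 1) = x.eval t := by
        intro t
        have := congrArg (eval t) heq
        simpa [eval_comp] using this
      have hnat : ∀ k : ℕ, x.eval (-(k : ℂ)) = x.eval 0 := by
        intro k
        induction k with
        | zero => simp
        | succ m ihm =>
          have h := heval (-(m : ℂ))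
          rw [ihm] at h
          rw [← h]
          congr 1
          push_cast
          ring
      have hroots : Set.Infinite {t : ℂ | IsRoot (x - C (x.eval 0)) t} := by
        apply Set.infinite_of_injective_forall_mem
          (f := fun k : ℕ => (-(k : ℂ)))
        · intro a b hab
          have hab' : (a : ℂ) = b := neg_injective hab
          exact_mod_cast hab'
        · intro k
          simp only [Set.mem_setOf_eq, IsRoot, eval_sub, eval_C, hnat k, sub_self]
      have hx_eq : x - C (x.eval 0) = 0 := eq_zero_of_infinite_isRoot _ hroots
      have : x = C (x.eval 0) := sub_eq_zero.mp hx_eq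
      have : x.natDegree = 0 := by rw [this]; exact natDegree_C _
      omega
    have hylt : y.natDegree < x.natDegree := natDegree_lt_natDegree hy0 hdlt
    exact ih y hyW hy0 (by omega)

/-- For a nonzero constant g ∈ ℂ*, the H₄-module M_{(g,0)} = ℂ[s]
(p·x = x(s-1)g, q·x = 0, r·x = 0, s·x = s·x(s)) is irreducible: every
ℂ-subspace invariant under the H₄-action is 0 or everything.  (The actions of
q and r are zero, so invariance under them is automatic.) -/
theorem stmt10 (g : ℂ) (hg : g ≠ 0) (W : Submodule ℂ (Polynomial ℂ))
    (hP : ∀ x ∈ W,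
      Polynomial.aeval (Polynomial.X - Polynomial.C 1 : Polynomial ℂ) x * Polynomial.C g ∈ W)
    (hS : ∀ x ∈ W, Polynomial.X * x ∈ W) :
    W = ⊥ ∨ W = ⊤ := by
  by_cases hW : W = ⊥
  · exact Or.inl hW
  right
  obtain ⟨x, hxW, hx0⟩ := (Submodule.ne_bot_iff W).mp hW
  have hS' : ∀ y ∈ W, y.comp (X - C 1) ∈ W := by
    intro y hy
    have h1 := hP y hy
    have h2 : aeval (X - C 1 : Polynomial ℂ) y * C g = g • y.comp (X - C 1) := by
      rw [comp_eq_aeval, smul_eq_C_mul, mul_comm]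
    rw [h2] at h1
    have := W.smul_mem g⁻¹ h1
    rwa [smul_smul, inv_mul_cancel₀ hg, one_smul] at this
  have hone : (1 : Polynomial ℂ) ∈ W :=
    stmt10_one_mem W hS' x.natDegree x hxW hx0 le_rfl
  have hpow : ∀ n : ℕ, (X : Polynomial ℂ) ^ n ∈ W := by
    intro n
    induction n with
    | zero => simpa using hone
    | succ m ihm =>
      have := hS _ ihm
      rwa [← pow_succ'] at this
  rw [Submodule.eq_top_iff']
  intro p
  rw [p.as_sum_range]
  apply Submodule.sum_mem
  intro i _
  have : (monomial i (p.coeff i) : Polynomial ℂ) = p.coeff i • X ^ i := by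
    rw [smul_eq_C_mul, C_mul_X_pow_eq_monomial]
  rw [this]
  exact W.smul_mem _ (hpow i)
end

section
/- Let h(s) = a₁s + a₂ with a₁ ∈ ℂ*, a₂ ∈ ℂ, and b ∈ ℂ*. The H₄-module M_{(h,b)} = ℂ[s] (with p·x = x(s-1)h(s), q·x = x(s+1)b, r·x = -a₁b·x, s·x = s·x(s)) is irreducible. -/
/-!
Since `s` acts as multiplication by `X`, an invariant subspace `W` is an ideal of `ℂ[X]`,
say `(g)`, and since `q` acts as `b` times the shift `x ↦ x(X + 1)`, `g` divides `g(X + 1)`.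
Then every root `α` of `g` gives the roots `α + n` for all `n : ℕ`, so a nonzero `g` has
no roots and is a unit, `ℂ` being algebraically closed.
-/

open Polynomial

namespace Polynomial

section Ideal

variable {R : Type*} [CommSemiring R]

theorem mul_mem_of_forall_X_mul_mem (W : Submodule R R[X]) (hX : ∀ x ∈ W, X * x ∈ W)
    (c : R[X]) {x : R[X]} (hx : x ∈ W) : c * x ∈ W := by
  induction c using Polynomial.induction_on with
  | C a => simpa only [C_mul', smul_eq_mul] using W.smul_mem a hx
  | add p q hp hq => simpa only [add_mul] using W.add_mem hp hq
  | monomial n a ih => simpa only [pow_succ, mul_left_comm _ X, mul_assoc] using hX _ ih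

def idealOfForallXMulMem (W : Submodule R R[X]) (hX : ∀ x ∈ W, X * x ∈ W) : Ideal R[X] where
  toAddSubmonoid := W.toAddSubmonoid
  smul_mem' c _ hx := mul_mem_of_forall_X_mul_mem W hX c hx

end Ideal

theorem IsRoot.add_one_of_dvd_comp {R : Type*} [CommSemiring R] {g : R[X]}
    (hg : g ∣ g.comp (X + C 1)) {α : R} (hα : g.IsRoot α) : g.IsRoot (α + 1) := by
  simpa [IsRoot, eval_comp] using hα.dvd hg

theorem eq_zero_of_dvd_comp_of_isRoot {K : Type*} [CommRing K] [IsDomain K] [CharZero K]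
    {g : K[X]} (hg : g ∣ g.comp (X + C 1)) {α : K} (hα : g.IsRoot α) : g = 0 := by
  have hroots : ∀ n : ℕ, g.IsRoot (α + n) := by
    intro n
    induction n with
    | zero => simpa using hα
    | succ n ih => simpa [add_assoc] using ih.add_one_of_dvd_comp hg
  refine g.eq_zero_of_infinite_isRoot
    (Set.infinite_of_injective_forall_mem (f := fun n : ℕ => α + n) ?_ hroots)
  intro m n hmn
  exact_mod_cast add_left_cancel hmn

theorem eq_bot_or_eq_top_of_forall_X_mul_mem_of_forall_comp_mem {K : Type*}
    [Field K] [IsAlgClosed K] [CharZero K] (W : Submodule K K[X]) (hX : ∀ x ∈ W, X * x ∈ W)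
    (hshift : ∀ x ∈ W, x.comp (X + C 1) ∈ W) : W = ⊥ ∨ W = ⊤ := by
  set I := idealOfForallXMulMem W hX
  obtain ⟨g, hIg⟩ := (IsPrincipalIdealRing.principal I).principal
  have hmem : ∀ x, x ∈ W ↔ g ∣ x := fun x => (hIg ▸ Ideal.mem_span_singleton : x ∈ I ↔ g ∣ x)
  by_cases hg0 : g = 0
  · left
    ext x
    simp [hmem, hg0]
  · right
    have hdvd : g ∣ g.comp (X + C 1) := (hmem _).1 (hshift g ((hmem g).2 dvd_rfl))
    have hdeg : g.degree = 0 := by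
      by_contra hdeg
      obtain ⟨α, hα⟩ := IsAlgClosed.exists_root g hdeg
      exact hg0 (eq_zero_of_dvd_comp_of_isRoot hdvd hα)
    have hunit : IsUnit g := isUnit_iff_degree_eq_zero.2 hdeg
    ext x
    simp [hmem, hunit.dvd]

end Polynomial

theorem stmt12_general (b : ℂ) (hb : b ≠ 0)
    (W : Submodule ℂ (Polynomial ℂ))
    (hQ : ∀ x ∈ W,
      Polynomial.aeval (Polynomial.X + Polynomial.C 1 : Polynomial ℂ) x * Polynomial.C b ∈ W)
    (hS : ∀ x ∈ W, Polynomial.X * x ∈ W) :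
    W = ⊥ ∨ W = ⊤ := by
  refine eq_bot_or_eq_top_of_forall_X_mul_mem_of_forall_comp_mem W hS fun x hx => ?_
  have hbx := W.smul_mem b⁻¹ (hQ x hx)
  rwa [smul_eq_C_mul, mul_comm, mul_assoc, ← C_mul, mul_inv_cancel₀ hb, C_1, mul_one,
    ← comp_eq_aeval] at hbx

/-- For h(s) = a₁s + a₂ with a₁ ≠ 0 and b ≠ 0, the H₄-module M_{(h,b)} = ℂ[s]
(p·x = x(s-1)h(s), q·x = x(s+1)b, r·x = -a₁b·x, s·x = s·x(s)) is irreducible: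
every ℂ-subspace invariant under the four actions is 0 or everything. -/
theorem stmt12 (a₁ a₂ b : ℂ) (ha₁ : a₁ ≠ 0) (hb : b ≠ 0)
    (W : Submodule ℂ (Polynomial ℂ))
    (hP : ∀ x ∈ W,
      Polynomial.aeval (Polynomial.X - Polynomial.C 1 : Polynomial ℂ) x *
        (Polynomial.C a₁ * Polynomial.X + Polynomial.C a₂) ∈ W)
    (hQ : ∀ x ∈ W,
      Polynomial.aeval (Polynomial.X + Polynomial.C 1 : Polynomial ℂ) x * Polynomial.C b ∈ W)
    (hR : ∀ x ∈ W, (-(a₁ * b)) • x ∈ W)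
    (hS : ∀ x ∈ W, Polynomial.X * x ∈ W) :
    W = ⊥ ∨ W = ⊤ :=
  stmt12_general b hb W hQ hS
end

section
/- Every H₄-module M which is free of rank one over U(ℂs) = ℂ[s] (with s acting by multiplication) is isomorphic to one of: M_{(g,0)}, M_{(0,g)} for g ∈ ℂ[s]; M_{(h,b)}, M_{(b,h)} for a degree-one polynomial h and b ∈ ℂ*; M_{(a,b)} for a,b ∈ ℂ*; or M₀ (where p, q, r act by zero). -/
open Polynomial

private lemma act_formula (T : Module.End ℂ (Polynomial ℂ)) (w : Polynomial ℂ)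
    (h : ∀ x, T (Polynomial.X * x) = w * T x) :
    ∀ f, T f = f.comp w * T 1 := by
  have hx : ∀ n : ℕ, T (X ^ n) = w ^ n * T 1 := by
    intro n
    induction n with
    | zero => simp
    | succ n ih =>
        rw [pow_succ, mul_comm (X ^ n) X, h, ih, pow_succ]
        ring
  intro f
  induction f using Polynomial.induction_on' with
  | add p q hp hq => rw [map_add, hp, hq, add_comp, add_mul]
  | monomial n a =>
      rw [← C_mul_X_pow_eq_monomial, ← smul_eq_C_mul, map_smul, hx]
      simp [smul_comp, pow_comp, smul_eq_C_mul, mul_assoc]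

private lemma linear_of_diff (t : Polynomial ℂ) (γ : ℂ)
    (h : ∀ a : ℂ, t.eval (a + 1) = t.eval a + γ) :
    t = C (t.eval 0) + C γ * X := by
  have key : ∀ n : ℕ, t.eval (n : ℂ) = t.eval 0 + n * γ := by
    intro n
    induction n with
    | zero => simp
    | succ n ih => push_cast; rw [h, ih]; ring
  have hz : ∀ n : ℕ, (t - (C (t.eval 0) + C γ * X)).IsRoot n := by
    intro n
    simp only [IsRoot, eval_sub, eval_add, eval_C, eval_mul, eval_X, key n]
    ring
  have h0 : t - (C (t.eval 0) + C γ * X) = 0 :=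
    Polynomial.eq_zero_of_infinite_isRoot _
      (Set.infinite_of_injective_forall_mem (f := fun n : ℕ => (n : ℂ))
        Nat.cast_injective hz)
  exact sub_eq_zero.mp h0

/-- Classification: every H₄-module which is free of rank one over
U(ℂs) = ℂ[s] (s acting by multiplication) is isomorphic, via a linear
equivalence φ commuting with the s-action, to one of the modules
M_{(g,0)}, M_{(0,g)}, M_{(h,b)}, M_{(b,h)}, M_{(a,b)}, M₀. -/
theorem stmt14 (P Q R S : Module.End ℂ (Polynomial ℂ))
    (hS : ∀ x, S x = Polynomial.X * x)
    (hPQ : ⁅P, Q⁆ = R) (hSP : ⁅S, P⁆ = P) (hSQ : ⁅S, Q⁆ = -Q)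
    (hRP : ⁅R, P⁆ = 0) (hRQ : ⁅R, Q⁆ = 0) (hRS : ⁅R, S⁆ = 0) :
    ∃ φ : Polynomial ℂ ≃ₗ[ℂ] Polynomial ℂ,
      (∀ x, φ (S x) = Polynomial.X * φ x) ∧
      ((∃ g : Polynomial ℂ,
          (∀ x, φ (P x) =
            Polynomial.aeval (Polynomial.X - Polynomial.C 1 : Polynomial ℂ) (φ x) * g) ∧
          (∀ x, φ (Q x) = 0) ∧ (∀ x, φ (R x) = 0)) ∨
       (∃ g : Polynomial ℂ,
          (∀ x, φ (Q x) =
            Polynomial.aeval (Polynomial.X + Polynomial.C 1 : Polynomial ℂ) (φ x) * g) ∧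
          (∀ x, φ (P x) = 0) ∧ (∀ x, φ (R x) = 0)) ∨
       (∃ a₁ a₂ b : ℂ, a₁ ≠ 0 ∧ b ≠ 0 ∧
          (∀ x, φ (P x) =
            Polynomial.aeval (Polynomial.X - Polynomial.C 1 : Polynomial ℂ) (φ x) *
              (Polynomial.C a₁ * Polynomial.X + Polynomial.C a₂)) ∧
          (∀ x, φ (Q x) =
            Polynomial.aeval (Polynomial.X + Polynomial.C 1 : Polynomial ℂ) (φ x) *
              Polynomial.C b) ∧
          (∀ x, φ (R x) = (-(a₁ * b)) • φ x)) ∨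
       (∃ a₁ a₂ b : ℂ, a₁ ≠ 0 ∧ b ≠ 0 ∧
          (∀ x, φ (P x) =
            Polynomial.aeval (Polynomial.X - Polynomial.C 1 : Polynomial ℂ) (φ x) *
              Polynomial.C b) ∧
          (∀ x, φ (Q x) =
            Polynomial.aeval (Polynomial.X + Polynomial.C 1 : Polynomial ℂ) (φ x) *
              (Polynomial.C a₁ * Polynomial.X + Polynomial.C a₂)) ∧
          (∀ x, φ (R x) = (-(a₁ * b)) • φ x)) ∨
       (∃ a b : ℂ, a ≠ 0 ∧ b ≠ 0 ∧
          (∀ x, φ (P x) =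
            Polynomial.aeval (Polynomial.X - Polynomial.C 1 : Polynomial ℂ) (φ x) *
              Polynomial.C a) ∧
          (∀ x, φ (Q x) =
            Polynomial.aeval (Polynomial.X + Polynomial.C 1 : Polynomial ℂ) (φ x) *
              Polynomial.C b) ∧
          (∀ x, φ (R x) = 0)) ∨
       ((∀ x, φ (P x) = 0) ∧ (∀ x, φ (Q x) = 0) ∧ (∀ x, φ (R x) = 0))) := by
  simp only [← Polynomial.comp_eq_aeval]
  have hP : ∀ x, P (Polynomial.X * x) = (X - C 1) * P x := by
    intro x
    have h := LinearMap.ext_iff.mp hSP x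
    simp only [Ring.lie_def, LinearMap.sub_apply, Module.End.mul_apply, hS] at h
    simp only [map_one]
    linear_combination -h
  have hQ' : ∀ x, Q (Polynomial.X * x) = (X + C 1) * Q x := by
    intro x
    have h := LinearMap.ext_iff.mp hSQ x
    simp only [Ring.lie_def, LinearMap.sub_apply, Module.End.mul_apply, hS,
      LinearMap.neg_apply] at h
    simp only [map_one]
    linear_combination -h
  have hR' : ∀ x, R (Polynomial.X * x) = Polynomial.X * R x := by
    intro x
    have h := LinearMap.ext_iff.mp hRS x
    simp only [Ring.lie_def, LinearMap.sub_apply, Module.End.mul_apply, hS,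
      LinearMap.zero_apply] at h
    linear_combination h
  have hPf := act_formula P (X - C 1) hP
  have hQf := act_formula Q (X + C 1) hQ'
  have hRf : ∀ f, R f = f * R 1 := fun f => by rw [act_formula R X hR' f, comp_X]
  have E2 : (Q 1).comp (X - C 1) * P 1 - (P 1).comp (X + C 1) * Q 1 = R 1 := by
    have h := LinearMap.ext_iff.mp hPQ 1
    simp only [Ring.lie_def, LinearMap.sub_apply, Module.End.mul_apply] at h
    rw [hPf (Q 1), hQf (P 1)] at h
    exact h
  refine ⟨LinearEquiv.refl ℂ (Polynomial ℂ), fun x => hS x, ?_⟩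
  simp only [LinearEquiv.refl_apply]
  by_cases hu : P 1 = 0
  · by_cases hv : Q 1 = 0
    · refine Or.inr (Or.inr (Or.inr (Or.inr (Or.inr ⟨?_, ?_, ?_⟩))))
      · intro x; rw [hPf x, hu, mul_zero]
      · intro x; rw [hQf x, hv, mul_zero]
      · intro x; rw [hRf x, ← E2, hu, hv]; simp [zero_comp]
    · refine Or.inr (Or.inl ⟨Q 1, fun x => hQf x,
        fun x => by rw [hPf x, hu, mul_zero],
        fun x => by rw [hRf x, ← E2, hu]; simp [zero_comp]⟩)
  · by_cases hv : Q 1 = 0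
    · refine Or.inl ⟨P 1, fun x => hPf x,
        fun x => by rw [hQf x, hv, mul_zero],
        fun x => by rw [hRf x, ← E2, hv]; simp [zero_comp]⟩
    · -- both nonzero
      have E1 : P 1 * R 1 = (R 1).comp (X - C 1) * P 1 := by
        have h := LinearMap.ext_iff.mp hRP 1
        simp only [Ring.lie_def, LinearMap.sub_apply, Module.End.mul_apply,
          LinearMap.zero_apply] at h
        rw [hRf (P 1), hPf (R 1)] at h
        linear_combination h
      have hcc : R 1 = (R 1).comp (X - C 1) :=
        mul_right_cancel₀ hu (by linear_combination E1)
      have hcC : R 1 = C ((R 1).eval 0) := by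
        have hce : ∀ a : ℂ, (R 1).eval (a + 1) = (R 1).eval a + 0 := by
          intro a
          conv_lhs => rw [hcc]
          simp [eval_comp]
        have := linear_of_diff (R 1) 0 hce
        simpa using this
      set t := (P 1).comp (X + C 1) * Q 1 with ht
      have hcompid : ((P 1).comp (X + C 1)).comp (X - C 1) = P 1 := by
        rw [comp_assoc]
        simp
      have hcompne : (P 1).comp (X + C 1) ≠ 0 := by
        intro h
        exact hu (by rw [← hcompid, h, zero_comp])
      have E2' : t.comp (X - C 1) - t = C ((R 1).eval 0) := by
        rw [ht, mul_comp, hcompid, ← hcC, ← E2]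
        ring
      have hdiff : ∀ a : ℂ, t.eval (a + 1) = t.eval a + (-(R 1).eval 0) := by
        intro a
        have h2 := congrArg (Polynomial.eval (a + 1)) E2'
        simp only [eval_sub, eval_comp, eval_X, eval_C, eval_one, add_sub_cancel_right] at h2
        linear_combination -h2
      have hlin := linear_of_diff t _ hdiff
      have htdeg : t.natDegree ≤ 1 := by
        rw [hlin]
        compute_degree
      have hdeg : (P 1).natDegree + (Q 1).natDegree ≤ 1 := by
        have hmul := natDegree_mul hcompne hv
        rw [natDegree_comp, natDegree_X_add_C, mul_one] at hmul
        rw [← ht] at hmul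
        omega
      rw [ht] at E2
      by_cases hd1 : (P 1).natDegree = 1
      · -- deg u = 1, v constant: branch 3
        have hdv : (Q 1).natDegree = 0 := by omega
        obtain ⟨a1, a2, ha1, hueq⟩ : ∃ a1 a2 : ℂ, a1 ≠ 0 ∧ P 1 = C a1 * X + C a2 := by
          refine ⟨(P 1).coeff 1, (P 1).coeff 0, ?_, eq_X_add_C_of_natDegree_le_one hd1.le⟩
          have h := leadingCoeff_ne_zero.mpr hu
          have h2 : (P 1).coeff (P 1).natDegree ≠ 0 := h
          rwa [hd1] at h2
        obtain ⟨b, hb, hveq⟩ : ∃ b : ℂ, b ≠ 0 ∧ Q 1 = C b :=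
          ⟨(Q 1).coeff 0, fun h0 => hv (by
            rw [eq_C_of_natDegree_eq_zero hdv, h0, map_zero]),
            eq_C_of_natDegree_eq_zero hdv⟩
        have hc3 : R 1 = C (-(a1 * b)) := by
          rw [← E2, hueq, hveq]
          simp only [C_comp, add_comp, mul_comp, X_comp, map_neg, map_mul, map_one]
          ring
        refine Or.inr (Or.inr (Or.inl ⟨a1, a2, b, ha1, hb, ?_, ?_, ?_⟩))
        · intro x; rw [hPf x, hueq]
        · intro x; rw [hQf x, hveq]
        · intro x; rw [hRf x, hc3, smul_eq_C_mul]; ring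
      · by_cases hd2 : (Q 1).natDegree = 1
        · -- deg v = 1, u constant: branch 4
          have hdu : (P 1).natDegree = 0 := by omega
          obtain ⟨a1, a2, ha1, hveq⟩ : ∃ a1 a2 : ℂ, a1 ≠ 0 ∧ Q 1 = C a1 * X + C a2 := by
            refine ⟨(Q 1).coeff 1, (Q 1).coeff 0, ?_, eq_X_add_C_of_natDegree_le_one hd2.le⟩
            have h := leadingCoeff_ne_zero.mpr hv
            have h2 : (Q 1).coeff (Q 1).natDegree ≠ 0 := h
            rwa [hd2] at h2
          obtain ⟨b, hb, hueq⟩ : ∃ b : ℂ, b ≠ 0 ∧ P 1 = C b :=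
            ⟨(P 1).coeff 0, fun h0 => hu (by
              rw [eq_C_of_natDegree_eq_zero hdu, h0, map_zero]),
              eq_C_of_natDegree_eq_zero hdu⟩
          have hc4 : R 1 = C (-(a1 * b)) := by
            rw [← E2, hueq, hveq]
            simp only [C_comp, add_comp, mul_comp, X_comp, sub_comp, map_neg, map_mul, map_one]
            ring
          refine Or.inr (Or.inr (Or.inr (Or.inl ⟨a1, a2, b, ha1, hb, ?_, ?_, ?_⟩)))
          · intro x; rw [hPf x, hueq]
          · intro x; rw [hQf x, hveq]
          · intro x; rw [hRf x, hc4, smul_eq_C_mul]; ring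
        · -- both constants: branch 5
          have hdu : (P 1).natDegree = 0 := by omega
          have hdv : (Q 1).natDegree = 0 := by omega
          obtain ⟨a, ha, hueq⟩ : ∃ a : ℂ, a ≠ 0 ∧ P 1 = C a :=
            ⟨(P 1).coeff 0, fun h0 => hu (by
              rw [eq_C_of_natDegree_eq_zero hdu, h0, map_zero]),
              eq_C_of_natDegree_eq_zero hdu⟩
          obtain ⟨b, hb, hveq⟩ : ∃ b : ℂ, b ≠ 0 ∧ Q 1 = C b :=
            ⟨(Q 1).coeff 0, fun h0 => hv (by
              rw [eq_C_of_natDegree_eq_zero hdv, h0, map_zero]),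
              eq_C_of_natDegree_eq_zero hdv⟩
          refine Or.inr (Or.inr (Or.inr (Or.inr (Or.inl ⟨a, b, ha, hb, ?_, ?_, ?_⟩))))
          · intro x; rw [hPf x, hueq]
          · intro x; rw [hQf x, hveq]
          · intro x
            rw [hRf x, ← E2, hueq, hveq]
            simp only [C_comp]
            ring
end

section
/- Let M be an Ĥ₄-module free of rank one over ℂ[s,d], with p·1 ≠ 0, (s⊗tᵏ)·1 = αₖs + βₖ with αₖ ∈ ℂ*, and suppose p·1 = g₀(s) ∈ ℂ[s] (degree 0 in d). Then (p⊗tᵏ)·1 = α₁ᵏ · (p·1) for all k ∈ ℤ, where α₁ = α. -/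
/-! Since `s = s ⊗ t⁰` acts by multiplication and commutes with every `s ⊗ tᵐ`, each `s ⊗ tᵐ` is
ℂ[s]-linear, while `[s, p ⊗ tᵏ] = p ⊗ tᵏ` makes `p ⊗ tᵏ` shift `s` to `s - 1`. Hence, whenever
`(p ⊗ tᵏ)·1 ∈ ℂ[s]`, the constant term `βₘ` cancels in `[s ⊗ tᵐ, p ⊗ tᵏ]·1` and
`(p ⊗ tᵐ⁺ᵏ)·1 = αₘ (p ⊗ tᵏ)·1`. Taking `k = 0` gives `(p ⊗ tᵏ)·1 = αₖ (p·1)`; comparing the two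
resulting expressions for `(p ⊗ tᵐ⁺ᵏ)·1` (with `p·1 ≠ 0`) shows that `α` is a character of `ℤ`,
so `αₖ = α₁ᵏ`. -/

open Polynomial

/-- ℂ[s,d], realized as polynomials in d (outer variable) with coefficients in
ℂ[s] (inner variable). -/
abbrev NWA : Type := Polynomial (Polynomial ℂ)

/-- A representation of the affine Nappi-Witten Lie algebra Ĥ₄ on ℂ[s,d]:
operators for p⊗tᵏ, q⊗tᵏ, r⊗tᵏ, s⊗tᵏ, 𝐤 and d satisfying the defining
bracket relations of Ĥ₄ (with (p,q) = (r,s) = 1, other pairings zero). -/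
structure NWAffineRep where
  P : ℤ → Module.End ℂ NWA
  Q : ℤ → Module.End ℂ NWA
  R : ℤ → Module.End ℂ NWA
  S : ℤ → Module.End ℂ NWA
  K : Module.End ℂ NWA
  D : Module.End ℂ NWA
  rel_PQ : ∀ k l : ℤ, ⁅P k, Q l⁆ = R (k + l) + (if k + l = 0 then (k : ℂ) else 0) • K
  rel_PP : ∀ k l : ℤ, ⁅P k, P l⁆ = 0
  rel_QQ : ∀ k l : ℤ, ⁅Q k, Q l⁆ = 0
  rel_PR : ∀ k l : ℤ, ⁅P k, R l⁆ = 0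
  rel_QR : ∀ k l : ℤ, ⁅Q k, R l⁆ = 0
  rel_RR : ∀ k l : ℤ, ⁅R k, R l⁆ = 0
  rel_SP : ∀ k l : ℤ, ⁅S k, P l⁆ = P (k + l)
  rel_SQ : ∀ k l : ℤ, ⁅S k, Q l⁆ = -(Q (k + l))
  rel_RS : ∀ k l : ℤ, ⁅R k, S l⁆ = (if k + l = 0 then (k : ℂ) else 0) • K
  rel_SS : ∀ k l : ℤ, ⁅S k, S l⁆ = 0
  rel_DP : ∀ k : ℤ, ⁅D, P k⁆ = (k : ℂ) • P k
  rel_DQ : ∀ k : ℤ, ⁅D, Q k⁆ = (k : ℂ) • Q k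
  rel_DR : ∀ k : ℤ, ⁅D, R k⁆ = (k : ℂ) • R k
  rel_DS : ∀ k : ℤ, ⁅D, S k⁆ = (k : ℂ) • S k
  rel_KP : ∀ k : ℤ, ⁅K, P k⁆ = 0
  rel_KQ : ∀ k : ℤ, ⁅K, Q k⁆ = 0
  rel_KR : ∀ k : ℤ, ⁅K, R k⁆ = 0
  rel_KS : ∀ k : ℤ, ⁅K, S k⁆ = 0
  rel_KD : ⁅K, D⁆ = 0

namespace NWAffineRep

variable (ρ : NWAffineRep)

theorem S_apply_C_X_mul (hS0 : ∀ x : NWA, ρ.S 0 x = C X * x) (m : ℤ) (x : NWA) :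
    ρ.S m (C X * x) = C X * ρ.S m x := by
  have h := LinearMap.congr_fun (ρ.rel_SS 0 m) x
  simp only [LieRing.of_associative_ring_bracket, LinearMap.sub_apply, Module.End.mul_apply,
    LinearMap.zero_apply, hS0] at h
  exact (sub_eq_zero.mp h).symm

theorem S_apply_C (hS0 : ∀ x : NWA, ρ.S 0 x = C X * x) (m : ℤ) (f : ℂ[X]) :
    ρ.S m (C f) = C f * ρ.S m 1 := by
  induction f using Polynomial.induction_on with
  | C a =>
    change ρ.S m (algebraMap ℂ NWA a) = algebraMap ℂ NWA a * _
    rw [Algebra.algebraMap_eq_smul_one, map_smul, smul_one_mul]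
  | add p q hp hq => simp only [map_add, add_mul, hp, hq]
  | monomial n a ih =>
    have hX : (C (C a * X ^ (n + 1)) : NWA) = C X * C (C a * X ^ n) := by
      rw [← map_mul]; ring_nf
    rw [hX, ρ.S_apply_C_X_mul hS0, ih, mul_assoc]

theorem P_apply_C_X_mul (hS0 : ∀ x : NWA, ρ.S 0 x = C X * x) (k : ℤ) (x : NWA) :
    ρ.P k (C X * x) = C X * ρ.P k x - ρ.P k x := by
  have h := LinearMap.congr_fun (ρ.rel_SP 0 k) x
  simp only [LieRing.of_associative_ring_bracket, LinearMap.sub_apply, Module.End.mul_apply,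
    hS0, zero_add] at h
  linear_combination -h

theorem P_add_apply_one (hS0 : ∀ x : NWA, ρ.S 0 x = C X * x) {m k : ℤ} {a b : ℂ}
    (hSm : ρ.S m 1 = C (C a * X + C b)) {f : ℂ[X]} (hf : ρ.P k 1 = C f) :
    ρ.P (m + k) 1 = a • ρ.P k 1 := by
  have h := LinearMap.congr_fun (ρ.rel_SP m k) 1
  simp only [LieRing.of_associative_ring_bracket, LinearMap.sub_apply,
    Module.End.mul_apply] at h
  have hSm_smul : ρ.S m 1 = a • (C X * 1) + b • 1 := by
    rw [hSm, mul_one, Algebra.smul_def, Algebra.smul_def, mul_one]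
    simp only [map_add, map_mul]
    rfl
  rw [← h, hf, ρ.S_apply_C hS0, hSm_smul, map_add, map_smul, map_smul, ρ.P_apply_C_X_mul hS0, hf]
  simp only [Algebra.smul_def, mul_one]
  ring

end NWAffineRep

theorem eq_zpow_of_map_add {G₀ : Type*} [GroupWithZero G₀] {f : ℤ → G₀} (h0 : f 0 = 1)
    (hadd : ∀ m k, f (m + k) = f m * f k) (k : ℤ) : f k = f 1 ^ k := by
  have hinv : f (-1) = (f 1)⁻¹ :=
    eq_inv_of_mul_eq_one_left (by rw [← hadd, neg_add_cancel, h0])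
  have hne : f 1 ≠ 0 := left_ne_zero_of_mul_eq_one (by rw [← hadd, add_neg_cancel, h0])
  induction k using Int.induction_on with
  | zero => rw [zpow_zero, h0]
  | succ n ih => rw [hadd, ih, zpow_add_one₀ hne]
  | pred n ih => rw [sub_eq_add_neg, hadd, ih, hinv, ← sub_eq_add_neg, zpow_sub_one₀ hne]

theorem stmt19_general (ρ : NWAffineRep)
    (hS0 : ∀ x : NWA, ρ.S 0 x = Polynomial.C (Polynomial.X : Polynomial ℂ) * x)
    (α β : ℤ → ℂ)
    (hSk : ∀ k : ℤ, ρ.S k 1 =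
      Polynomial.C (Polynomial.C (α k) * Polynomial.X + Polynomial.C (β k)))
    (g₀ : Polynomial ℂ) (hg₀ : g₀ ≠ 0) (hp : ρ.P 0 1 = Polynomial.C g₀) :
    ∀ k : ℤ, ρ.P k 1 = (α 1) ^ k • ρ.P 0 1 := by
  have hP : ∀ m, ρ.P m 1 = α m • ρ.P 0 1 := fun m => by
    simpa using ρ.P_add_apply_one hS0 (hSk m) hp
  have hPC : ∀ m, ρ.P m 1 = C (α m • g₀) := fun m => by rw [hP, hp, smul_C]
  have cancel := smul_left_injective ℂ (hp ▸ C_ne_zero.mpr hg₀ : ρ.P 0 1 ≠ 0)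
  have h0 : α 0 = 1 := cancel (by simpa using (hP 0).symm)
  have hadd : ∀ m k, α (m + k) = α m * α k := fun m k => cancel <| by
    simp only [mul_smul, ← hP, ρ.P_add_apply_one hS0 (hSk m) (hPC k)]
  intro k
  rw [hP, eq_zpow_of_map_add h0 hadd k]

/-- Let M be an Ĥ₄-module free of rank one over ℂ[s,d] (s and d acting by
multiplication), with (s⊗tᵏ)·1 = αₖs + βₖ where αₖ ∈ ℂ*, and suppose
p·1 = g₀(s) ∈ ℂ[s] is nonzero (degree 0 in d).  Then
(p⊗tᵏ)·1 = α₁ᵏ·(p·1) for all k ∈ ℤ, where α₁ = α. -/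
theorem stmt19 (ρ : NWAffineRep)
    (hS0 : ∀ x : NWA, ρ.S 0 x = Polynomial.C (Polynomial.X : Polynomial ℂ) * x)
    (hD : ∀ x : NWA, ρ.D x = Polynomial.X * x)
    (α β : ℤ → ℂ) (hα : ∀ k, α k ≠ 0)
    (hSk : ∀ k : ℤ, ρ.S k 1 =
      Polynomial.C (Polynomial.C (α k) * Polynomial.X + Polynomial.C (β k)))
    (g₀ : Polynomial ℂ) (hg₀ : g₀ ≠ 0) (hp : ρ.P 0 1 = Polynomial.C g₀) :
    ∀ k : ℤ, ρ.P k 1 = (α 1) ^ k • ρ.P 0 1 :=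
  stmt19_general ρ hS0 α β hSk g₀ hg₀ hp
end
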